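/- There exists a constant 𝒞* depending only on d, m and 𝒞 with the following property: if X = (X_n)_{n∈ℤ^d} is a strictly stationary, centered, m-dependent random field with E[X_0⁴] ≤ 𝒞, then for every J > 0, every B ⊆ ℤ^d and every N ∈ ℕ, E[S_N(B,X^J)⁴] ≤ 𝒞*·(card(B_N)/(2N+1)^d)², where X^J is the truncation of X at level J. -/

import Mathlib

open MeasureTheory ProbabilityTheory Filter
open scoped ENNReal NNReal

noncomputable section

/-- The discrete cube `[-N,N]^d ⊆ ℤ^d` as a finset. -/
def intCube (d N : ℕ) : Finset (Fin d → ℤ) :=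
  Fintype.piFinset fun _ => Finset.Icc (-(N : ℤ)) (N : ℤ)

open Classical in
/-- `A_N = A ∩ [-N,N]^d` as a finset. -/
def restr (d : ℕ) (A : Set (Fin d → ℤ)) (N : ℕ) : Finset (Fin d → ℤ) :=
  (intCube d N).filter fun n => n ∈ A

/-- The normalized partial sum `S_N(A,X) = (2N+1)^{-d/2} ∑_{n ∈ A_N} X_n`. -/
def SN {Ω : Type*} (d N : ℕ) (A : Set (Fin d → ℤ)) (X : (Fin d → ℤ) → Ω → ℝ)
    (ω : Ω) : ℝ :=
  (Real.sqrt ((2 * N + 1) ^ d))⁻¹ * ∑ n ∈ restr d A N, X n ω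

/-- `H_N(k;A) = card(A_N ∩ (k + A_N)) / (2N+1)^d`. -/
def HN (d : ℕ) (A : Set (Fin d → ℤ)) (N : ℕ) (k : Fin d → ℤ) : ℝ :=
  ((restr d A N ∩ (restr d A N).image (k + ·)).card : ℝ) / (2 * N + 1 : ℝ) ^ d

/-- The sup-norm `‖k‖ = max_i |k_i|` on `ℤ^d`, as a natural number. -/
def supNormZ {d : ℕ} (k : Fin d → ℤ) : ℕ :=
  Finset.univ.sup fun i => (k i).natAbs

/-- `dist(A,B) ≥ r` in the sup-norm. -/
def setDistGe {d : ℕ} (A B : Set (Fin d → ℤ)) (r : ℝ) : Prop :=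
  ∀ a ∈ A, ∀ b ∈ B, r ≤ (supNormZ (a - b) : ℝ)

/-- `A` is asymptotically measurable with limit function `Hlim`. -/
def IsAM (d : ℕ) (A : Set (Fin d → ℤ)) (Hlim : (Fin d → ℤ) → ℝ) : Prop :=
  ∀ k, Tendsto (fun N => HN d A N k) atTop (nhds (Hlim k)) ∧ 0 < Hlim k ∧ Hlim k < 1

/-- The truncation of the field `X` at level `J`:
`X^J_n = X_n·1_{|X_n|≤J} − E[X_n·1_{|X_n|≤J}]`. -/
def truncF {Ω : Type*} [MeasureSpace Ω] {d : ℕ} (X : (Fin d → ℤ) → Ω → ℝ) (J : ℝ)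
    (n : Fin d → ℤ) (ω : Ω) : ℝ :=
  (if |X n ω| ≤ J then X n ω else 0) - ∫ ω', if |X n ω'| ≤ J then X n ω' else 0

/-- The covariance function `r^X(k) = E[X_0 X_k]`. -/
def covF {Ω : Type*} [MeasureSpace Ω] {d : ℕ} (X : (Fin d → ℤ) → Ω → ℝ)
    (k : Fin d → ℤ) : ℝ :=
  ∫ ω, X 0 ω * X k ω

/-- Strict stationarity of a random field: for every `k` the shifted family has the
same joint distribution as the original one. -/
def StrictStat {Ω : Type*} [MeasureSpace Ω] {d : ℕ} (X : (Fin d → ℤ) → Ω → ℝ) : Prop :=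
  ∀ k : Fin d → ℤ,
    Measure.map (fun ω (n : Fin d → ℤ) => X (n + k) ω) (ℙ : Measure Ω)
      = Measure.map (fun ω (n : Fin d → ℤ) => X n ω) (ℙ : Measure Ω)

/-- `m`-dependence: families indexed by finite sets at sup-norm distance `> m`
are independent. -/
def MDep {Ω : Type*} [MeasureSpace Ω] {d : ℕ} (m : ℕ) (X : (Fin d → ℤ) → Ω → ℝ) : Prop :=
  ∀ S T : Finset (Fin d → ℤ),
    (∀ s ∈ S, ∀ t ∈ T, (m : ℝ) < (supNormZ (s - t) : ℝ)) →
      IndepFun (fun ω (s : S) => X s.1 ω) (fun ω (t : T) => X t.1 ω) ℙ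

/-- Convergence in distribution to a centered Gaussian with variance `v`. -/
def WeakToGaussian {Ω : Type*} [MeasureSpace Ω] (Y : ℕ → Ω → ℝ) (v : ℝ≥0) : Prop :=
  ∀ f : BoundedContinuousFunction ℝ ℝ,
    Tendsto (fun N => ∫ ω, f (Y N ω)) atTop (nhds (∫ x, f x ∂gaussianReal 0 v))

end

/-!
Write `Y = X^J`. Truncating coordinatewise and recentering keeps the field centered and
`m`-dependent, and by Jensen and stationarity `E[Y_n⁴] ≤ 16 E[X_0⁴] ≤ 16 𝒞`. Expanding the fourth
power, `E[S_N(B,Y)⁴]` is a normalized sum of `E[Y_a Y_b Y_c Y_e]` over quadruples in `B_N`. If one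
index is at distance `> m` from the other three, independence and centering kill the term;
otherwise the four indices split into two pairs at distance `≤ 3m`, and the term is at most `16 𝒞`
by AM-GM. Each point of `B_N` has at most `(6m+1)^d` points within distance `3m`, which gives
`Cstar = 3 · 16 𝒞 · (6m+1)^{2d}`.
-/
lemma supNormZ_eq_norm {d : ℕ} (k : Fin d → ℤ) : (supNormZ k : ℝ) = ‖k‖ := by
  rw [Pi.norm_def, supNormZ, ← NNReal.coe_natCast,
    Finset.apply_sup_eq_sup_comp_of_linearOrder _ Nat.mono_cast Nat.cast_zero]
  simp [Function.comp_def, NNReal.natCast_natAbs]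

lemma mem_intCube_iff_norm_le {d N : ℕ} {k : Fin d → ℤ} : k ∈ intCube d N ↔ ‖k‖ ≤ N := by
  simp only [intCube, Fintype.mem_piFinset, Finset.mem_Icc,
    pi_norm_le_iff_of_nonneg (Nat.cast_nonneg N), Int.norm_eq_abs, abs_le]
  norm_cast

lemma card_intCube (d N : ℕ) : (intCube d N).card = (2 * N + 1) ^ d := by
  simp only [intCube, Fintype.card_piFinset, Int.card_Icc, Finset.prod_const, Finset.card_univ,
    Fintype.card_fin]
  congr 1
  omega

lemma card_filter_dist_le {d : ℕ} (F : Finset (Fin d → ℤ)) (x : Fin d → ℤ) (N : ℕ) :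
    (F.filter fun y => dist x y ≤ N).card ≤ (2 * N + 1) ^ d := by
  rw [← card_intCube]
  refine Finset.card_le_card_of_injOn (x - ·) (fun y hy => ?_)
    (fun y _ z _ h => sub_right_injective h)
  rw [Finset.mem_coe, Finset.mem_filter, dist_eq_norm] at hy
  exact mem_intCube_iff_norm_le.2 hy.2

section Pairing

variable {α : Type*} [PseudoMetricSpace α] {r : ℝ}

lemma dist_le_three_mul_of_near_pair {p q x y : α} (hpq : dist p q ≤ r)
    (hx : dist x p ≤ r ∨ dist x q ≤ r ∨ dist x y ≤ r)
    (hy : dist y p ≤ r ∨ dist y q ≤ r ∨ dist y x ≤ r) :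
    dist x y ≤ 3 * r := by
  rcases hx with hx | hx | hx <;> rcases hy with hy | hy | hy <;>
    linarith [dist_triangle x p y, dist_triangle x q y, dist_triangle p q y, dist_triangle q p y,
      dist_comm p y, dist_comm q y, dist_comm x y, dist_comm p q, dist_nonneg (x := p) (y := q)]

lemma exists_pairing_of_forall_exists_near {a b c e : α}
    (ha : dist a b ≤ r ∨ dist a c ≤ r ∨ dist a e ≤ r)
    (hb : dist b a ≤ r ∨ dist b c ≤ r ∨ dist b e ≤ r)
    (hc : dist c a ≤ r ∨ dist c b ≤ r ∨ dist c e ≤ r)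
    (he : dist e a ≤ r ∨ dist e b ≤ r ∨ dist e c ≤ r) :
    (dist a b ≤ 3 * r ∧ dist c e ≤ 3 * r) ∨ (dist a c ≤ 3 * r ∧ dist b e ≤ 3 * r) ∨
      (dist a e ≤ 3 * r ∧ dist b c ≤ 3 * r) := by
  have h3 : ∀ {x y : α}, dist x y ≤ r → dist x y ≤ 3 * r := fun h => by
    linarith [dist_nonneg.trans h]
  rcases ha with h | h | h
  · exact .inl ⟨h3 h, dist_le_three_mul_of_near_pair h hc he⟩
  · exact .inr <| .inl ⟨h3 h, dist_le_three_mul_of_near_pair h (by tauto) (by tauto)⟩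
  · exact .inr <| .inr ⟨h3 h, dist_le_three_mul_of_near_pair h (by tauto) (by tauto)⟩

noncomputable def nearInd (r : ℝ) (x y : α) : ℝ :=
  if dist x y ≤ r then 1 else 0

end Pairing

lemma sum_sum_nearInd_le {d : ℕ} (F : Finset (Fin d → ℤ)) (N : ℕ) :
    ∑ x ∈ F, ∑ y ∈ F, nearInd N x y ≤ F.card * (2 * N + 1) ^ d := by
  calc ∑ x ∈ F, ∑ y ∈ F, nearInd N x y ≤ ∑ _x ∈ F, ((2 * N + 1) ^ d : ℝ) := by
        refine Finset.sum_le_sum fun x _ => ?_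
        simp only [nearInd, Finset.sum_boole]
        exact_mod_cast card_filter_dist_le F x N
    _ = F.card * (2 * N + 1) ^ d := by simp

lemma sum_pow_four_eq_sum_product {ι R : Type*} [CommSemiring R] (s : Finset ι) (f : ι → R) :
    (∑ i ∈ s, f i) ^ 4 = ∑ x ∈ s ×ˢ s ×ˢ s ×ˢ s, f x.1 * f x.2.1 * f x.2.2.1 * f x.2.2.2 := by
  simp only [Finset.sum_product, pow_succ, pow_zero, one_mul, Finset.sum_mul, Finset.mul_sum]
  exact Finset.sum_congr rfl fun _ _ => Finset.sum_congr rfl fun _ _ =>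
    Finset.sum_congr rfl fun _ _ => Finset.sum_congr rfl fun _ _ => by ring

lemma sum_four_le_three_mul_sq {ι : Type*} (s : Finset ι) (f : ι → ι → ι → ι → ℝ)
    (g : ι → ι → ℝ) (K : ℝ)
    (h : ∀ a b c e, f a b c e ≤ K * (g a b * g c e + g a c * g b e + g a e * g b c)) :
    ∑ a ∈ s, ∑ b ∈ s, ∑ c ∈ s, ∑ e ∈ s, f a b c e ≤ 3 * K * (∑ x ∈ s, ∑ y ∈ s, g x y) ^ 2 := by
  have h₁₃ : (∑ x ∈ s, ∑ y ∈ s, g x y) ^ 2 =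
      ∑ a ∈ s, ∑ b ∈ s, ∑ c ∈ s, ∑ e ∈ s, g a c * g b e := by
    simp only [sq, Finset.sum_mul_sum]
  have h₁₂ : ∑ a ∈ s, ∑ b ∈ s, ∑ c ∈ s, ∑ e ∈ s, g a b * g c e =
      ∑ a ∈ s, ∑ b ∈ s, ∑ c ∈ s, ∑ e ∈ s, g a c * g b e :=
    Finset.sum_congr rfl fun _ _ => Finset.sum_comm
  have h₁₄ : ∑ a ∈ s, ∑ b ∈ s, ∑ c ∈ s, ∑ e ∈ s, g a e * g b c =
      ∑ a ∈ s, ∑ b ∈ s, ∑ c ∈ s, ∑ e ∈ s, g a c * g b e :=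
    Finset.sum_congr rfl fun _ _ => Finset.sum_congr rfl fun _ _ => Finset.sum_comm
  calc ∑ a ∈ s, ∑ b ∈ s, ∑ c ∈ s, ∑ e ∈ s, f a b c e
      ≤ ∑ a ∈ s, ∑ b ∈ s, ∑ c ∈ s, ∑ e ∈ s,
          K * (g a b * g c e + g a c * g b e + g a e * g b c) := by
        gcongr with a _ b _ c _ e _
        exact h a b c e
    _ = K * (∑ a ∈ s, ∑ b ∈ s, ∑ c ∈ s, ∑ e ∈ s, g a b * g c e
          + ∑ a ∈ s, ∑ b ∈ s, ∑ c ∈ s, ∑ e ∈ s, g a c * g b e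
          + ∑ a ∈ s, ∑ b ∈ s, ∑ c ∈ s, ∑ e ∈ s, g a e * g b c) := by
        simp only [Finset.mul_sum, mul_add, Finset.sum_add_distrib]
    _ = 3 * K * (∑ x ∈ s, ∑ y ∈ s, g x y) ^ 2 := by
      rw [h₁₂, h₁₄, ← h₁₃]
      ring

section Moments

variable {Ω : Type*} [MeasurableSpace Ω] {μ : Measure Ω}

lemma MeasureTheory.MemLp.integrable_pow_four {f : Ω → ℝ} (hf : MemLp f 4 μ) :
    Integrable (fun ω => f ω ^ 4) μ := by
  have := hf.integrable_norm_pow (p := 4) (by norm_num)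
  simpa only [Real.norm_eq_abs, Even.pow_abs ⟨2, rfl⟩] using this

lemma mul_four_le_sum_pow_four_div_four (x y z w : ℝ) :
    x * y * z * w ≤ (x ^ 4 + y ^ 4 + z ^ 4 + w ^ 4) / 4 := by
  nlinarith [sq_nonneg (x * y - z * w), sq_nonneg (x ^ 2 - y ^ 2), sq_nonneg (z ^ 2 - w ^ 2)]

lemma integrable_mul_four {f₁ f₂ f₃ f₄ : Ω → ℝ} (h₁ : MemLp f₁ 4 μ) (h₂ : MemLp f₂ 4 μ)
    (h₃ : MemLp f₃ 4 μ) (h₄ : MemLp f₄ 4 μ) :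
    Integrable (fun ω => f₁ ω * f₂ ω * f₃ ω * f₄ ω) μ := by
  refine Integrable.mono' ((((h₁.integrable_pow_four.fun_add h₂.integrable_pow_four).fun_add
    h₃.integrable_pow_four).fun_add h₄.integrable_pow_four).div_const 4)
    (((h₁.1.mul h₂.1).mul h₃.1).mul h₄.1) (ae_of_all _ fun ω => ?_)
  simpa only [Real.norm_eq_abs, abs_mul, Even.pow_abs ⟨2, rfl⟩] using
    mul_four_le_sum_pow_four_div_four |f₁ ω| |f₂ ω| |f₃ ω| |f₄ ω|

lemma integral_mul_four_le {f₁ f₂ f₃ f₄ : Ω → ℝ} (h₁ : MemLp f₁ 4 μ) (h₂ : MemLp f₂ 4 μ)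
    (h₃ : MemLp f₃ 4 μ) (h₄ : MemLp f₄ 4 μ) :
    ∫ ω, f₁ ω * f₂ ω * f₃ ω * f₄ ω ∂μ ≤
      ((∫ ω, f₁ ω ^ 4 ∂μ) + (∫ ω, f₂ ω ^ 4 ∂μ) + (∫ ω, f₃ ω ^ 4 ∂μ) + ∫ ω, f₄ ω ^ 4 ∂μ) / 4 := by
  have i₁₂ := h₁.integrable_pow_four.fun_add h₂.integrable_pow_four
  have i₁₂₃ := i₁₂.fun_add h₃.integrable_pow_four
  have i₁₂₃₄ := i₁₂₃.fun_add h₄.integrable_pow_four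
  calc ∫ ω, f₁ ω * f₂ ω * f₃ ω * f₄ ω ∂μ
      ≤ ∫ ω, (f₁ ω ^ 4 + f₂ ω ^ 4 + f₃ ω ^ 4 + f₄ ω ^ 4) / 4 ∂μ :=
        integral_mono (integrable_mul_four h₁ h₂ h₃ h₄) (i₁₂₃₄.div_const 4)
          fun ω => mul_four_le_sum_pow_four_div_four _ _ _ _
    _ = _ := by
        rw [integral_div, integral_add i₁₂₃ h₄.integrable_pow_four,
          integral_add i₁₂ h₃.integrable_pow_four,
          integral_add h₁.integrable_pow_four h₂.integrable_pow_four]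

lemma integral_sub_integral_pow_four_le [IsProbabilityMeasure μ] {f : Ω → ℝ} (hf : MemLp f 4 μ) :
    ∫ ω, (f ω - ∫ ω', f ω' ∂μ) ^ 4 ∂μ ≤ 16 * ∫ ω, f ω ^ 4 ∂μ := by
  set c := ∫ ω', f ω' ∂μ
  have hf4 := hf.integrable_pow_four
  have jensen : c ^ 4 ≤ ∫ ω, f ω ^ 4 ∂μ :=
    (Even.convexOn_pow ⟨2, rfl⟩).map_integral_le (continuous_pow 4).continuousOn isClosed_univ
      (ae_of_all _ fun _ => Set.mem_univ _) (hf.integrable (by norm_num)) hf4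
  calc ∫ ω, (f ω - c) ^ 4 ∂μ ≤ ∫ ω, (8 * f ω ^ 4 + 8 * c ^ 4) ∂μ := by
        refine integral_mono (hf.sub (memLp_const c)).integrable_pow_four
          ((hf4.const_mul 8).add (integrable_const _)) fun ω => ?_
        nlinarith [sq_nonneg (f ω + c), sq_nonneg (f ω ^ 2 - c ^ 2), sq_nonneg (f ω - c)]
    _ = 8 * ∫ ω, f ω ^ 4 ∂μ + 8 * c ^ 4 := by
        rw [integral_add (hf4.const_mul 8) (integrable_const _), integral_const_mul]
        simp
    _ ≤ 16 * ∫ ω, f ω ^ 4 ∂μ := by linarith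

end Moments

section RandomField

variable {Ω : Type*} [MeasureSpace Ω] {d m : ℕ}

lemma MDep.comp {X : (Fin d → ℤ) → Ω → ℝ} (hX : MDep m X) {φ : (Fin d → ℤ) → ℝ → ℝ}
    (hφ : ∀ n, Measurable (φ n)) : MDep m fun n ω => φ n (X n ω) := fun S T hST =>
  (hX S T hST).comp (φ := fun (g : S → ℝ) (s : S) => φ s (g s))
    (ψ := fun (g : T → ℝ) (t : T) => φ t (g t))
    (measurable_pi_lambda _ fun s => (hφ s).comp (measurable_pi_apply s))
    (measurable_pi_lambda _ fun t => (hφ t).comp (measurable_pi_apply t))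

lemma MDep.integral_mul_eq_zero {Y : (Fin d → ℤ) → Ω → ℝ} (hY : MDep m Y)
    (hYm : ∀ n, AEStronglyMeasurable (Y n) ℙ) {p q r s : Fin d → ℤ} (hp : ∫ ω, Y p ω = 0)
    (hq : m < dist p q) (hr : m < dist p r) (hs : m < dist p s) :
    ∫ ω, Y p ω * (Y q ω * Y r ω * Y s ω) = 0 := by
  have hfar : ∀ x ∈ ({p} : Finset _), ∀ y ∈ ({q, r, s} : Finset _),
      (m : ℝ) < (supNormZ (x - y) : ℝ) := by
    simp only [Finset.mem_singleton, Finset.mem_insert, supNormZ_eq_norm, ← dist_eq_norm]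
    rintro x rfl y (rfl | rfl | rfl) <;> assumption
  have hind : IndepFun (Y p) (fun ω => Y q ω * Y r ω * Y s ω) ℙ :=
    (hY _ _ hfar).comp (φ := fun (g : ({p} : Finset _) → ℝ) => g ⟨p, by simp⟩)
      (ψ := fun (g : ({q, r, s} : Finset _) → ℝ) =>
        g ⟨q, by simp⟩ * g ⟨r, by simp⟩ * g ⟨s, by simp⟩)
      (by fun_prop) (by fun_prop)
  rw [← Pi.mul_def, hind.integral_mul_eq_mul_integral (hYm p) (((hYm q).mul (hYm r)).mul (hYm s)),
    hp, zero_mul]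

variable {Y : (Fin d → ℤ) → Ω → ℝ} {K : ℝ}

lemma MDep.integral_mul_four_le (hY : MDep m Y) (hL4 : ∀ n, MemLp (Y n) 4 ℙ)
    (hcent : ∀ n, ∫ ω, Y n ω = 0) (hK : ∀ n, ∫ ω, Y n ω ^ 4 ≤ K) (a b c e : Fin d → ℤ) :
    ∫ ω, Y a ω * Y b ω * Y c ω * Y e ω ≤
      K * (nearInd (3 * m) a b * nearInd (3 * m) c e + nearInd (3 * m) a c * nearInd (3 * m) b e
        + nearInd (3 * m) a e * nearInd (3 * m) b c) := by
  have hK₀ : 0 ≤ K := (integral_nonneg fun ω => Even.pow_nonneg ⟨2, rfl⟩ (Y a ω)).trans (hK a)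
  by_cases hisolated : (m < dist a b ∧ m < dist a c ∧ m < dist a e) ∨
      (m < dist b a ∧ m < dist b c ∧ m < dist b e) ∨ (m < dist c a ∧ m < dist c b ∧ m < dist c e) ∨
      (m < dist e a ∧ m < dist e b ∧ m < dist e c)
  · have hm := fun p => (hL4 p).1
    have hvanish : ∫ ω, Y a ω * Y b ω * Y c ω * Y e ω = 0 := by
      rcases hisolated with ⟨h₁, h₂, h₃⟩ | ⟨h₁, h₂, h₃⟩ | ⟨h₁, h₂, h₃⟩ | ⟨h₁, h₂, h₃⟩
      · convert hY.integral_mul_eq_zero hm (hcent a) h₁ h₂ h₃ using 3; ring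
      · convert hY.integral_mul_eq_zero hm (hcent b) h₁ h₂ h₃ using 3; ring
      · convert hY.integral_mul_eq_zero hm (hcent c) h₁ h₂ h₃ using 3; ring
      · convert hY.integral_mul_eq_zero hm (hcent e) h₁ h₂ h₃ using 3; ring
    rw [hvanish]
    exact mul_nonneg hK₀ (by simp only [nearInd]; positivity)
  simp only [not_or, not_and_or, not_lt] at hisolated
  obtain ⟨ha, hb, hc, he⟩ := hisolated
  calc ∫ ω, Y a ω * Y b ω * Y c ω * Y e ω ≤ K := by
        linarith [_root_.integral_mul_four_le (hL4 a) (hL4 b) (hL4 c) (hL4 e),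
          hK a, hK b, hK c, hK e]
    _ ≤ _ := by
        refine le_mul_of_one_le_right hK₀ ?_
        rcases exists_pairing_of_forall_exists_near ha hb hc he with
          ⟨h₁, h₂⟩ | ⟨h₁, h₂⟩ | ⟨h₁, h₂⟩ <;>
        · simp only [nearInd, h₁, h₂, if_true, one_mul]
          split_ifs <;> norm_num

theorem MDep.integral_sum_pow_four_le (hY : MDep m Y) (hL4 : ∀ n, MemLp (Y n) 4 ℙ)
    (hcent : ∀ n, ∫ ω, Y n ω = 0) (hK : ∀ n, ∫ ω, Y n ω ^ 4 ≤ K) (F : Finset (Fin d → ℤ)) :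
    ∫ ω, (∑ n ∈ F, Y n ω) ^ 4 ≤ 3 * K * (F.card * (6 * m + 1) ^ d) ^ 2 := by
  have hK₀ : 0 ≤ K := (integral_nonneg fun ω => Even.pow_nonneg ⟨2, rfl⟩ (Y 0 ω)).trans (hK 0)
  simp_rw [sum_pow_four_eq_sum_product F fun n => Y n _]
  rw [integral_finsetSum _ fun x _ => integrable_mul_four (hL4 _) (hL4 _) (hL4 _) (hL4 _)]
  simp only [Finset.sum_product]
  calc _ ≤ 3 * K * (∑ x ∈ F, ∑ y ∈ F, nearInd (3 * m) x y) ^ 2 :=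
        sum_four_le_three_mul_sq F _ _ K (hY.integral_mul_four_le hL4 hcent hK)
    _ ≤ 3 * K * (F.card * (6 * m + 1) ^ d) ^ 2 := by
        have hrows : ∑ x ∈ F, ∑ y ∈ F, nearInd (3 * m) x y ≤ F.card * (6 * m + 1) ^ d := by
          convert sum_sum_nearInd_le F (3 * m) using 3 <;> push_cast <;> ring
        gcongr
        exact Finset.sum_nonneg fun x _ => Finset.sum_nonneg fun y _ => by
          simp only [nearInd]; positivity

end RandomField

section Truncation

noncomputable def truncAt (J x : ℝ) : ℝ :=
  if |x| ≤ J then x else 0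

lemma measurable_truncAt (J : ℝ) : Measurable (truncAt J) :=
  Measurable.ite (measurableSet_le continuous_abs.measurable measurable_const) measurable_id
    measurable_const

lemma abs_truncAt_le (J x : ℝ) : |truncAt J x| ≤ |x| := by
  unfold truncAt
  split_ifs <;> simp

variable {Ω : Type*} [MeasureSpace Ω] {d m : ℕ} {X : (Fin d → ℤ) → Ω → ℝ} {J : ℝ}

lemma truncF_apply (n : Fin d → ℤ) (ω : Ω) :
    truncF X J n ω = truncAt J (X n ω) - ∫ ω', truncAt J (X n ω') := rfl

lemma MDep.truncF (hX : MDep m X) : MDep m (truncF X J) :=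
  hX.comp fun _ => (measurable_truncAt J).sub_const _

lemma memLp_truncAt_comp {p : ℝ≥0∞} {f : Ω → ℝ} (hf : MemLp f p ℙ) :
    MemLp (fun ω => truncAt J (f ω)) p ℙ :=
  hf.mono ((measurable_truncAt J).comp_aemeasurable hf.1.aemeasurable).aestronglyMeasurable
    (ae_of_all _ fun ω => by simpa only [Real.norm_eq_abs] using abs_truncAt_le J (f ω))

lemma memLp_truncF [IsFiniteMeasure (ℙ : Measure Ω)] {n : Fin d → ℤ} {p : ℝ≥0∞}
    (hX : MemLp (X n) p ℙ) : MemLp (truncF X J n) p ℙ :=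
  (memLp_truncAt_comp hX).sub (memLp_const _)

variable [IsProbabilityMeasure (ℙ : Measure Ω)]

lemma integral_truncF {n : Fin d → ℤ} (hX : Integrable (X n) ℙ) : ∫ ω, truncF X J n ω = 0 := by
  have hT : Integrable (fun ω => truncAt J (X n ω)) ℙ :=
    memLp_one_iff_integrable.1 (memLp_truncAt_comp (memLp_one_iff_integrable.2 hX))
  simp only [truncF_apply]
  rw [integral_sub hT (integrable_const _)]
  simp

lemma integral_truncF_pow_four_le {n : Fin d → ℤ} (hX : MemLp (X n) 4 ℙ) :
    ∫ ω, truncF X J n ω ^ 4 ≤ 16 * ∫ ω, X n ω ^ 4 := by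
  have hT := memLp_truncAt_comp (J := J) hX
  calc ∫ ω, truncF X J n ω ^ 4 ≤ 16 * ∫ ω, truncAt J (X n ω) ^ 4 :=
        integral_sub_integral_pow_four_le hT
    _ ≤ 16 * ∫ ω, X n ω ^ 4 := by
        refine mul_le_mul_of_nonneg_left (integral_mono hT.integrable_pow_four
          hX.integrable_pow_four fun ω => ?_) (by norm_num)
        simpa only [Even.pow_abs ⟨2, rfl⟩] using
          pow_le_pow_left₀ (abs_nonneg _) (abs_truncAt_le J (X n ω)) 4

end Truncation

lemma StrictStat.identDistrib {Ω : Type*} [MeasureSpace Ω] {d : ℕ} {X : (Fin d → ℤ) → Ω → ℝ}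
    (h : StrictStat X) (hX : ∀ n, Measurable (X n)) (k : Fin d → ℤ) :
    IdentDistrib (X k) (X 0) ℙ ℙ where
  aemeasurable_fst := (hX k).aemeasurable
  aemeasurable_snd := (hX 0).aemeasurable
  map_eq := by
    have hfield : Measurable fun ω (n : Fin d → ℤ) => X n ω := measurable_pi_lambda _ hX
    have hshifted : Measurable fun ω (n : Fin d → ℤ) => X (n + k) ω :=
      measurable_pi_lambda _ fun n => hX _
    have := congrArg (Measure.map fun g : (Fin d → ℤ) → ℝ => g 0) (h k)
    rw [Measure.map_map (measurable_pi_apply 0) hshifted,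
      Measure.map_map (measurable_pi_apply 0) hfield] at this
    simpa only [Function.comp_def, zero_add] using this

lemma SN_pow_four {Ω : Type*} (d N : ℕ) (A : Set (Fin d → ℤ)) (X : (Fin d → ℤ) → Ω → ℝ)
    (ω : Ω) : SN d N A X ω ^ 4 = (∑ n ∈ restr d A N, X n ω) ^ 4 / ((2 * N + 1 : ℝ) ^ d) ^ 2 := by
  rw [SN, mul_pow, inv_pow, show (4 : ℕ) = 2 * 2 from rfl, pow_mul,
    Real.sq_sqrt (by positivity), div_eq_inv_mul]

/-- **Uniform fourth-moment bound for truncations of `m`-dependent fields:**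
there is a constant `𝒞*` depending only on `d`, `m` and `𝒞` bounding
`E[S_N(B,X^J)⁴]` for all truncation levels `J`, sets `B` and `N`. -/
theorem truncated_fourth_moment_constant (d m : ℕ) (𝒞 : ℝ) :
    ∃ Cstar : ℝ, ∀ (Ω : Type) [MeasureSpace Ω],
      IsProbabilityMeasure (ℙ : Measure Ω) →
      ∀ X : (Fin d → ℤ) → Ω → ℝ, (∀ n, Measurable (X n)) →
        StrictStat X → (∀ n, ∫ ω, X n ω = 0) → MDep m X →
        (∀ n, MemLp (X n) 4 ℙ) → (∫ ω, (X 0 ω) ^ 4) ≤ 𝒞 →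
        ∀ J : ℝ, 0 < J → ∀ (B : Set (Fin d → ℤ)) (N : ℕ),
          ∫ ω, (SN d N B (truncF X J) ω) ^ 4
            ≤ Cstar * ((restr d B N).card / (2 * N + 1 : ℝ) ^ d) ^ 2 := by
  refine ⟨48 * 𝒞 * ((6 * m + 1) ^ d) ^ 2, ?_⟩
  intro Ω _ _ X hX hstat _ hdep hL4 h𝒞 J _ B N
  have hK : ∀ n, ∫ ω, truncF X J n ω ^ 4 ≤ 16 * 𝒞 := fun n =>
    calc ∫ ω, truncF X J n ω ^ 4 ≤ 16 * ∫ ω, X n ω ^ 4 := integral_truncF_pow_four_le (hL4 n)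
      _ = 16 * ∫ ω, X 0 ω ^ 4 := congrArg (16 * ·)
          ((hstat.identDistrib hX n).comp (u := fun x => x ^ 4) (by fun_prop)).integral_eq
      _ ≤ 16 * 𝒞 := by linarith
  have hsum := hdep.truncF.integral_sum_pow_four_le (fun n => memLp_truncF (hL4 n))
    (fun n => integral_truncF ((hL4 n).integrable (by norm_num))) hK (restr d B N)
  simp_rw [SN_pow_four]
  rw [integral_div]
  calc _ ≤ 3 * (16 * 𝒞) * ((restr d B N).card * (6 * m + 1) ^ d) ^ 2
          / ((2 * N + 1 : ℝ) ^ d) ^ 2 := div_le_div_of_nonneg_right hsum (by positivity)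
    _ = _ := by ring
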